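/- arXiv:1810.09670 — 4 statements merged into one kernel-verified Lean document; each statement's English description precedes it below -/
import Mathlib

section
/- For every u ∈ ℝ, the characteristic function of X_t under Q satisfies E_Q[exp(i u X_t)] = exp( t ( i u γ − σ²u²/2 + λ( e^{i u μ − δ²u²/2} − 1 ) ) ). -/
open MeasureTheory ProbabilityTheory

noncomputable section

/-- Codomains of the combined family `(W, N, Y₀, Y₁, …)`:
the first component is the Brownian value (real), the second the Poisson count (natural),
and the remaining ones the jump amplitudes (real). -/
def JDTy : Unit ⊕ Unit ⊕ ℕ → Type
  | Sum.inl _ => ℝ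
  | Sum.inr (Sum.inl _) => ℕ
  | Sum.inr (Sum.inr _) => ℝ

instance JDTy.instMeasurableSpace : ∀ i, MeasurableSpace (JDTy i)
  | Sum.inl _ => inferInstanceAs (MeasurableSpace ℝ)
  | Sum.inr (Sum.inl _) => inferInstanceAs (MeasurableSpace ℕ)
  | Sum.inr (Sum.inr _) => inferInstanceAs (MeasurableSpace ℝ)

/-- The combined family of random variables `(W, N, Y₀, Y₁, …)`. -/
def JDFam {Ω : Type*} (W : Ω → ℝ) (N : Ω → ℕ) (Y : ℕ → Ω → ℝ) : ∀ i, Ω → JDTy i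
  | Sum.inl _ => W
  | Sum.inr (Sum.inl _) => N
  | Sum.inr (Sum.inr j) => Y j

/-!
Split off the deterministic drift `e^{iuγt}`. On the event `{N = n}` the remaining integrand
`e^{iuσW} ∏_{j<n} e^{iuY_j}` times the indicator of that event is a product of functions of the
independent variables `W, N, Y₀, …, Y_{n-1}`, so its expectation factorises into
`P(N = n) · e^{-tσ²u²/2} · φ^n`, with `φ = e^{iuμ - δ²u²/2}` the characteristic function of a jump.
Summing over `n` (everything is bounded by `1`) gives the Poisson generating function
`∑ₙ P(N = n) φ^n = e^{λt(φ - 1)}`.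
-/

open Complex
open scoped NNReal ENNReal

section General

variable {Ω : Type*} [MeasurableSpace Ω] {μ : Measure Ω}

lemma ProbabilityTheory.iIndepFun.integral_finset_prod_comp {𝕜 ι : Type*} [RCLike 𝕜] {β : ι → Type*}
    {m : ∀ i, MeasurableSpace (β i)} {X : ∀ i, Ω → β i} (hX : iIndepFun X μ)
    (mX : ∀ i, AEMeasurable (X i) μ) {f : ∀ i, β i → 𝕜}
    (hf : ∀ i, AEStronglyMeasurable (f i) (μ.map (X i))) (s : Finset ι) :
    ∫ ω, ∏ i ∈ s, f i (X i ω) ∂μ = ∏ i ∈ s, ∫ ω, f i (X i ω) ∂μ := by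
  have hXs := (hX.precomp (g := ((↑) : s → ι)) Subtype.val_injective).integral_fun_prod_comp
    (fun i ↦ mX i) (fun i ↦ hf i)
  rw [Finset.prod_coe_sort s (fun i ↦ ∫ ω, f i (X i ω) ∂μ)] at hXs
  rw [← hXs]
  congr with ω
  exact (Finset.prod_coe_sort s (fun i ↦ f i (X i ω))).symm

lemma integral_cexp_mul_I_of_map_eq_gaussianReal {X : Ω → ℝ} {m : ℝ} {v : ℝ≥0}
    (hX : μ.map X = gaussianReal m v) (a : ℝ) :
    ∫ ω, cexp (a * X ω * I) ∂μ = cexp (a * m * I - v * a ^ 2 / 2) := by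
  have mX : AEMeasurable X μ := aemeasurable_of_map_neZero (by rw [hX]; infer_instance)
  rw [← charFun_gaussianReal, ← hX, charFun_apply_real,
    integral_map mX (by fun_prop)]

lemma integral_ite_eq_of_map_eq_poissonMeasure {N : Ω → ℕ} {r : ℝ≥0}
    (hN : μ.map N = poissonMeasure r) (n : ℕ) :
    ∫ ω, (if N ω = n then (1 : ℂ) else 0) ∂μ = (Real.exp (-r) * r ^ n / n.factorial : ℝ) := by
  have mN : AEMeasurable N μ := aemeasurable_of_map_neZero (by rw [hN]; infer_instance)
  calc ∫ ω, (if N ω = n then (1 : ℂ) else 0) ∂μ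
  _ = ∫ k, (if k = n then (1 : ℂ) else 0) ∂μ.map N :=
      (integral_map (f := fun k ↦ if k = n then (1 : ℂ) else 0) mN .of_discrete).symm
  _ = _ := by
      rw [hN, integral_poissonMeasure, tsum_eq_single n fun k hk ↦ by simp [hk]]
      simp

lemma integral_pow_poissonMeasure (r : ℝ≥0) (z : ℂ) :
    ∫ n, z ^ n ∂poissonMeasure r = cexp (r * (z - 1)) := by
  rw [integral_poissonMeasure]
  calc ∑' n, (Real.exp (-r) * r ^ n / n.factorial : ℝ) • z ^ n
  _ = ∑' n, Real.exp (-r) * ((r * z) ^ n / n.factorial) := by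
      congr with n
      rw [Complex.real_smul]
      push_cast
      ring
  _ = Real.exp (-r) * cexp (r * z) := by
      rw [tsum_mul_left, (NormedSpace.expSeries_div_hasSum_exp (r * z)).tsum_eq, exp_eq_exp_ℂ]
  _ = cexp (r * (z - 1)) := by
      rw [ofReal_exp, ← Complex.exp_add]
      push_cast
      ring_nf

lemma integral_comp_eq_tsum_integral_ite {E : Type*} [NormedAddCommGroup E] [NormedSpace ℝ E]
    [IsFiniteMeasure μ] {N : Ω → ℕ} {H : ℕ → Ω → E} {C : ℝ}
    (hH : ∀ n, AEStronglyMeasurable (fun ω ↦ if N ω = n then H n ω else 0) μ)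
    (hC : ∀ n ω, ‖H n ω‖ ≤ C) :
    ∫ ω, H (N ω) ω ∂μ = ∑' n, ∫ ω, (if N ω = n then H n ω else 0) ∂μ := by
  rw [← integral_tsum hH]
  · simp only [tsum_ite_eq']
  · rw [← lintegral_tsum fun n ↦ (hH n).enorm]
    refine ne_top_of_le_ne_top
      (lintegral_const_lt_top (μ := μ) (ENNReal.ofReal_ne_top (r := C))).ne
      (lintegral_mono fun ω ↦ ?_)
    simp only [apply_ite (‖·‖ₑ : E → ℝ≥0∞), enorm_zero]
    rw [tsum_ite_eq', ← ofReal_norm]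
    exact ENNReal.ofReal_le_ofReal (hC _ _)

end General

def jumpDiffusionFactor (a b : ℝ) (n : ℕ) : ∀ i, JDTy i → ℂ
  | Sum.inl _ => fun w : ℝ ↦ cexp (a * w * I)
  | Sum.inr (Sum.inl _) => fun k : ℕ ↦ if k = n then 1 else 0
  | Sum.inr (Sum.inr _) => fun y : ℝ ↦ cexp (b * y * I)

lemma measurable_jumpDiffusionFactor (a b : ℝ) (n : ℕ) :
    ∀ i, Measurable (jumpDiffusionFactor a b n i)
  | Sum.inl _ => by unfold jumpDiffusionFactor; fun_prop
  | Sum.inr (Sum.inl _) => measurable_from_nat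
  | Sum.inr (Sum.inr _) => by unfold jumpDiffusionFactor; fun_prop

def jumpDiffusionIndices (n : ℕ) : Finset (Unit ⊕ Unit ⊕ ℕ) :=
  Finset.univ.disjSum (Finset.univ.disjSum (Finset.range n))

section JumpDiffusion

variable {Ω : Type*} {W : Ω → ℝ} {N : Ω → ℕ} {Y : ℕ → Ω → ℝ}

lemma prod_jumpDiffusionFactor (a b : ℝ) (n : ℕ) (ω : Ω) :
    ∏ i ∈ jumpDiffusionIndices n, jumpDiffusionFactor a b n i (JDFam W N Y i ω)
      = if N ω = n then cexp (a * W ω * I) * ∏ j ∈ Finset.range n, cexp (b * Y j ω * I)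
        else 0 := by
  simp only [jumpDiffusionIndices, Finset.prod_disjSum, Finset.univ_unique, Finset.prod_singleton,
    jumpDiffusionFactor, JDFam]
  split_ifs <;> ring

variable [MeasurableSpace Ω] {Q : Measure Ω}

lemma aemeasurable_JDFam {ν₁ ν₃ : Measure ℝ} {ν₂ : Measure ℕ} [NeZero ν₁] [NeZero ν₂] [NeZero ν₃]
    (hW : Q.map W = ν₁) (hN : Q.map N = ν₂) (hY : ∀ j, Q.map (Y j) = ν₃) :
    ∀ i, AEMeasurable (JDFam W N Y i) Q
  | Sum.inl _ => show AEMeasurable W Q from aemeasurable_of_map_neZero (hW ▸ inferInstance)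
  | Sum.inr (Sum.inl _) => show AEMeasurable N Q from
      aemeasurable_of_map_neZero (hN ▸ inferInstance)
  | Sum.inr (Sum.inr j) => show AEMeasurable (Y j) Q from
      aemeasurable_of_map_neZero (hY j ▸ inferInstance)

lemma integral_prod_jumpDiffusionFactor {v w : ℝ≥0} {m : ℝ} {r : ℝ≥0}
    (hW : Q.map W = gaussianReal 0 v) (hN : Q.map N = poissonMeasure r)
    (hY : ∀ j, Q.map (Y j) = gaussianReal m w)
    (hIndep : iIndepFun (m := JDTy.instMeasurableSpace) (JDFam W N Y) Q) (a b : ℝ) (n : ℕ) :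
    ∫ ω, ∏ i ∈ jumpDiffusionIndices n, jumpDiffusionFactor a b n i (JDFam W N Y i ω) ∂Q
      = (Real.exp (-r) * r ^ n / n.factorial : ℝ) •
          (cexp (-(v * a ^ 2 / 2)) * cexp (b * m * I - w * b ^ 2 / 2) ^ n) := by
  rw [hIndep.integral_finset_prod_comp (aemeasurable_JDFam hW hN hY)
    (fun i ↦ (measurable_jumpDiffusionFactor a b n i).aestronglyMeasurable)]
  simp only [jumpDiffusionIndices, Finset.prod_disjSum, Finset.univ_unique, Finset.card_singleton,
    pow_one, jumpDiffusionFactor, JDFam, integral_cexp_mul_I_of_map_eq_gaussianReal hW,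
    integral_cexp_mul_I_of_map_eq_gaussianReal (hY _), integral_ite_eq_of_map_eq_poissonMeasure hN,
    Finset.prod_const, Finset.card_range, Complex.real_smul, ofReal_zero, mul_zero, zero_mul,
    zero_sub]
  ring

theorem integral_cexp_mul_prod_cexp_of_jumpDiffusion [IsProbabilityMeasure Q] {v w : ℝ≥0} {m : ℝ}
    {r : ℝ≥0} (hW : Q.map W = gaussianReal 0 v) (hN : Q.map N = poissonMeasure r)
    (hY : ∀ j, Q.map (Y j) = gaussianReal m w)
    (hIndep : iIndepFun (m := JDTy.instMeasurableSpace) (JDFam W N Y) Q) (a b : ℝ) :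
    ∫ ω, cexp (a * W ω * I) * ∏ j ∈ Finset.range (N ω), cexp (b * Y j ω * I) ∂Q
      = cexp (-(v * a ^ 2 / 2)) * cexp (r * (cexp (b * m * I - w * b ^ 2 / 2) - 1)) := by
  set H : ℕ → Ω → ℂ := fun n ω ↦ cexp (a * W ω * I) * ∏ j ∈ Finset.range n, cexp (b * Y j ω * I)
  have norm_H : ∀ n ω, ‖H n ω‖ ≤ 1 := fun n ω ↦ by
    simp only [H, norm_mul, norm_prod, ← ofReal_mul, norm_exp_ofReal_mul_I, Finset.prod_const_one,
      mul_one, le_refl]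
  have H_ite : ∀ n, (fun ω ↦ if N ω = n then H n ω else 0)
      = fun ω ↦ ∏ i ∈ jumpDiffusionIndices n, jumpDiffusionFactor a b n i (JDFam W N Y i ω) :=
    fun n ↦ funext fun ω ↦ (prod_jumpDiffusionFactor a b n ω).symm
  have mFam := aemeasurable_JDFam hW hN hY
  calc ∫ ω, H (N ω) ω ∂Q
  _ = ∑' n, ∫ ω, (if N ω = n then H n ω else 0) ∂Q := by
      refine integral_comp_eq_tsum_integral_ite (fun n ↦ ?_) norm_H
      rw [H_ite]
      exact Finset.aestronglyMeasurable_fun_prod _ fun i _ ↦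
        ((measurable_jumpDiffusionFactor a b n i).comp_aemeasurable (mFam i)).aestronglyMeasurable
  _ = ∑' n, (Real.exp (-r) * r ^ n / n.factorial : ℝ) •
        (cexp (-(v * a ^ 2 / 2)) * cexp (b * m * I - w * b ^ 2 / 2) ^ n) := by
      simp only [H_ite, integral_prod_jumpDiffusionFactor hW hN hY hIndep]
  _ = ∫ n, cexp (-(v * a ^ 2 / 2)) * cexp (b * m * I - w * b ^ 2 / 2) ^ n ∂poissonMeasure r :=
      (integral_poissonMeasure r _).symm
  _ = _ := by rw [integral_const_mul, integral_pow_poissonMeasure]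

end JumpDiffusion

theorem stmt0_general {Ω : Type*} [MeasurableSpace Ω] (Q : Measure Ω) [IsProbabilityMeasure Q]
    (γ μ σ δ lam t : ℝ) (hlam : 0 < lam) (ht : 0 < t)
    (W : Ω → ℝ) (N : Ω → ℕ) (Y : ℕ → Ω → ℝ)
    (hW : Measure.map W Q = gaussianReal 0 t.toNNReal)
    (hN : Measure.map N Q = poissonMeasure (lam * t).toNNReal)
    (hY : ∀ j, Measure.map (Y j) Q = gaussianReal μ (δ ^ 2).toNNReal)
    (hIndep : iIndepFun (m := JDTy.instMeasurableSpace) (JDFam W N Y) Q)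
    (X : Ω → ℝ) (hX : ∀ ω, X ω = γ * t + σ * W ω + ∑ j ∈ Finset.range (N ω), Y j ω)
    (u : ℝ) :
    ∫ ω, Complex.exp (Complex.I * u * X ω) ∂Q
      = Complex.exp ((t : ℂ) * (Complex.I * u * γ - (σ : ℂ) ^ 2 * u ^ 2 / 2
          + (lam : ℂ) * (Complex.exp (Complex.I * u * μ - (δ : ℂ) ^ 2 * u ^ 2 / 2) - 1))) := by
  have drift_split : ∀ ω, cexp (I * u * X ω) = cexp (u * γ * t * I) *
      (cexp ((u * σ : ℝ) * W ω * I) * ∏ j ∈ Finset.range (N ω), cexp (u * Y j ω * I)) := by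
    intro ω
    rw [hX ω, ← Complex.exp_sum, ← Complex.exp_add, ← Complex.exp_add, ← Finset.sum_mul,
      ← Finset.mul_sum]
    congr 1
    push_cast
    ring
  simp_rw [drift_split, integral_const_mul,
    integral_cexp_mul_prod_cexp_of_jumpDiffusion hW hN hY hIndep, Real.coe_toNNReal _ ht.le,
    Real.coe_toNNReal _ (sq_nonneg δ), Real.coe_toNNReal _ (mul_pos hlam ht).le, ← Complex.exp_add]
  push_cast
  ring_nf

/-- characteristic function of the jump-diffusion Lévy increment with
normally distributed jump amplitudes. -/
theorem stmt0 {Ω : Type*} [MeasurableSpace Ω] (Q : Measure Ω) [IsProbabilityMeasure Q]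
    (γ μ σ δ lam t : ℝ) (hσ : 0 < σ) (hδ : 0 < δ) (hlam : 0 < lam) (ht : 0 < t)
    (W : Ω → ℝ) (N : Ω → ℕ) (Y : ℕ → Ω → ℝ)
    (hW : Measure.map W Q = gaussianReal 0 t.toNNReal)
    (hN : Measure.map N Q = poissonMeasure (lam * t).toNNReal)
    (hY : ∀ j, Measure.map (Y j) Q = gaussianReal μ (δ ^ 2).toNNReal)
    (hIndep : iIndepFun (m := JDTy.instMeasurableSpace) (JDFam W N Y) Q)
    (X : Ω → ℝ) (hX : ∀ ω, X ω = γ * t + σ * W ω + ∑ j ∈ Finset.range (N ω), Y j ω)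
    (u : ℝ) :
    ∫ ω, Complex.exp (Complex.I * u * X ω) ∂Q
      = Complex.exp ((t : ℂ) * (Complex.I * u * γ - (σ : ℂ) ^ 2 * u ^ 2 / 2
          + (lam : ℂ) * (Complex.exp (Complex.I * u * μ - (δ : ℂ) ^ 2 * u ^ 2 / 2) - 1))) :=
  stmt0_general Q γ μ σ δ lam t hlam ht W N Y hW hN hY hIndep X hX u
end
end

section
/- For every Borel set A ⊆ ℝ, Q(X_t ∈ A) = ∫_A e^{−λt} Σ_{m=0}^∞ ( (λt)^m / ( m! √(2π(σ²t + mδ²)) ) ) · exp( −(x − γt − mμ)² / (2(σ²t + mδ²)) ) dx. -/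
open MeasureTheory ProbabilityTheory

noncomputable section

/-- Standard normal cumulative distribution function Φ. -/
def stdNormCDF (x : ℝ) : ℝ :=
  ∫ u in Set.Iic x, (Real.sqrt (2 * Real.pi))⁻¹ * Real.exp (-u ^ 2 / 2)

/-!
Given `N = m`, `X_t = γt + σW + Y₀ + ⋯ + Y_{m-1}` is a sum of independent Gaussians, hence
`N(γt + mμ, σ²t + mδ²)`. Since `N` is independent of `(W, Y)`, the law of `X_t` is the Poisson
mixture of these Gaussians; integrating the mixture density over `A` (the nonnegative terms have
integrals summing to at most one, so sum and integral commute) gives the series.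
-/

open Real Finset
open scoped NNReal ENNReal

def JDTy.toReal (c σ : ℝ) : ∀ i, JDTy i → ℝ
  | Sum.inl _ => fun x : ℝ ↦ c + σ * x
  | Sum.inr (Sum.inl _) => fun n : ℕ ↦ (n : ℝ)
  | Sum.inr (Sum.inr _) => fun y : ℝ ↦ y

lemma JDTy.measurable_toReal (c σ : ℝ) : ∀ i, Measurable (JDTy.toReal c σ i)
  | Sum.inl _ => measurable_const.add (measurable_id.const_mul σ)
  | Sum.inr (Sum.inl _) => measurable_from_top
  | Sum.inr (Sum.inr _) => measurable_id

section

variable {Ω : Type*} [MeasurableSpace Ω] {Q : Measure Ω}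

lemma hasLaw_of_map_eq {β : Type*} [MeasurableSpace β] {X : Ω → β} {μ : Measure β}
    [NeZero μ] (h : Q.map X = μ) : HasLaw X μ Q :=
  ⟨.of_map_ne_zero (h ▸ NeZero.ne μ), h⟩

lemma measure_preimage_eq_tsum_of_indepFun {β : Type*} [MeasurableSpace β] {N : Ω → ℕ}
    {Z : ℕ → Ω → β} {X : Ω → β} (hN : AEMeasurable N Q) (hZ : ∀ m, AEMeasurable (Z m) Q)
    (hind : ∀ m, IndepFun (Z m) N Q) (hX : ∀ ω, X ω = Z (N ω) ω) {A : Set β}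
    (hA : MeasurableSet A) :
    Q (X ⁻¹' A) = ∑' m, Q.map N {m} * Q.map (Z m) A := by
  have hsplit : X ⁻¹' A = ⋃ m, Z m ⁻¹' A ∩ N ⁻¹' {m} := by
    ext ω
    simp [hX]
  rw [hsplit, measure_iUnion₀ ?disj fun m ↦ ((hZ m).nullMeasurable hA).inter
    (hN.nullMeasurable (measurableSet_singleton m))]
  case disj =>
    intro i j hij
    refine (Set.disjoint_left.mpr ?_).aedisjoint
    rintro ω ⟨-, rfl⟩ ⟨-, hj⟩
    exact hij hj
  refine tsum_congr fun m ↦ ?_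
  rw [(hind m).measure_inter_preimage_eq_mul _ _ hA (measurableSet_singleton m), mul_comm,
    Measure.map_apply_of_aemeasurable hN (measurableSet_singleton m),
    Measure.map_apply_of_aemeasurable (hZ m) hA]

lemma hasLaw_add_sum_range_gaussianReal {U : Ω → ℝ} {Y : ℕ → Ω → ℝ} {a μ : ℝ} {v w : ℝ≥0}
    (hU : HasLaw U (gaussianReal a v) Q) (hY : ∀ j, HasLaw (Y j) (gaussianReal μ w) Q)
    (hind : ∀ m, IndepFun (fun ω ↦ U ω + ∑ j ∈ range m, Y j ω) (Y m) Q) (m : ℕ) :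
    HasLaw (fun ω ↦ U ω + ∑ j ∈ range m, Y j ω) (gaussianReal (a + m * μ) (v + m * w)) Q := by
  induction m with
  | zero => simpa using hU
  | succ m ih =>
    have hstep : (fun ω ↦ U ω + ∑ j ∈ range (m + 1), Y j ω)
        = (fun ω ↦ U ω + ∑ j ∈ range m, Y j ω) + Y m := by
      ext ω
      simp [sum_range_succ, add_assoc]
    rw [hstep]
    convert (hind m).hasLaw_add ih (hY m) using 1
    rw [gaussianReal_conv_gaussianReal]
    congr 1 <;> push_cast <;> ring

lemma JDFam.indepFun_sum_range {W : Ω → ℝ} {N : Ω → ℕ} {Y : ℕ → Ω → ℝ}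
    (hIndep : iIndepFun (JDFam W N Y) Q) (hW : AEMeasurable W Q)
    (hN : AEMeasurable N Q) (hY : ∀ j, AEMeasurable (Y j) Q) (c σ : ℝ) (m : ℕ) :
    IndepFun (fun ω ↦ c + σ * W ω + ∑ j ∈ range m, Y j ω) (Y m) Q ∧
      IndepFun (fun ω ↦ c + σ * W ω + ∑ j ∈ range m, Y j ω) N Q := by
  set F : Unit ⊕ Unit ⊕ ℕ → Ω → ℝ := fun i ↦ JDTy.toReal c σ i ∘ JDFam W N Y i
  have hF : iIndepFun F Q := hIndep.comp _ (JDTy.measurable_toReal c σ)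
  have hFm : ∀ i, AEMeasurable (F i) Q := by
    rintro (_ | _ | j)
    · exact (JDTy.measurable_toReal c σ _).comp_aemeasurable hW
    · exact (JDTy.measurable_toReal c σ _).comp_aemeasurable hN
    · exact (JDTy.measurable_toReal c σ _).comp_aemeasurable (hY j)
  set T : Finset (Unit ⊕ Unit ⊕ ℕ) :=
    insert (Sum.inl ()) ((range m).image (Sum.inr ∘ Sum.inr)) with hT
  have hsum : (fun ω ↦ c + σ * W ω + ∑ j ∈ range m, Y j ω) = ∑ i ∈ T, F i := by
    ext ω
    rw [Finset.sum_apply, sum_insert (by simp), sum_image (by simp)]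
    rfl
  have hY_eq : Y m = F (Sum.inr (Sum.inr m)) := rfl
  have hN_eq : N = Nat.floor ∘ F (Sum.inr (Sum.inl ())) := by
    ext ω
    exact (Nat.floor_natCast (N ω)).symm
  have hYT : Sum.inr (Sum.inr m) ∉ T := by simp [hT]
  have hNT : Sum.inr (Sum.inl ()) ∉ T := by simp [hT]
  rw [hsum, hY_eq, hN_eq]
  exact ⟨hF.indepFun_finsetSum_of_notMem₀ hFm hYT,
    (hF.indepFun_finsetSum_of_notMem₀ hFm hNT).comp measurable_id Nat.measurable_floor⟩

end

lemma toReal_tsum_mul_gaussianReal (P : Measure ℕ) [IsFiniteMeasure P] (a : ℕ → ℝ)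
    {v : ℕ → ℝ≥0} (hv : ∀ m, v m ≠ 0) (A : Set ℝ) :
    (∑' m, P {m} * gaussianReal (a m) (v m) A).toReal
      = ∫ x in A, ∑' m, P.real {m} * gaussianPDFReal (a m) (v m) x := by
  set f : ℕ → ℝ → ℝ := fun m x ↦ P.real {m} * gaussianPDFReal (a m) (v m) x
  have hf_nonneg : ∀ m x, 0 ≤ f m x :=
    fun m x ↦ mul_nonneg measureReal_nonneg (gaussianPDFReal_nonneg _ _ _)
  have hterm : ∀ m, P {m} * gaussianReal (a m) (v m) A = ENNReal.ofReal (∫ x in A, f m x) := by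
    intro m
    rw [gaussianReal_apply_eq_integral _ (hv m), integral_const_mul,
      ENNReal.ofReal_mul measureReal_nonneg, ofReal_measureReal]
  have hbound : ∑' m, ∫⁻ x in A, ‖f m x‖ₑ ≠ ⊤ := by
    refine ne_top_of_le_ne_top (measure_ne_top P Set.univ) ?_
    calc ∑' m, ∫⁻ x in A, ‖f m x‖ₑ
        = ∑' m, P {m} * gaussianReal (a m) (v m) A := by
          refine tsum_congr fun m ↦ ?_
          rw [hterm, ofReal_integral_eq_lintegral_ofReal
            ((integrable_gaussianPDFReal _ _).const_mul _).integrableOn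
            (ae_of_all _ (hf_nonneg m))]
          simp_rw [Real.enorm_of_nonneg (hf_nonneg m _)]
          rfl
      _ ≤ ∑' m, P {m} := ENNReal.tsum_le_tsum fun m ↦ mul_le_of_le_one_right' prob_le_one
      _ ≤ P Set.univ := tsum_measure_le_measure_univ
          (fun m ↦ (measurableSet_singleton m).nullMeasurableSet)
          fun i j hij ↦ (Set.disjoint_singleton.mpr hij).aedisjoint
  rw [tsum_congr hterm, ENNReal.tsum_toReal_eq fun _ ↦ ENNReal.ofReal_ne_top,
    integral_tsum (fun m ↦ ((measurable_gaussianPDFReal _ _).const_mul _).aestronglyMeasurable)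
      hbound]
  exact tsum_congr fun m ↦ ENNReal.toReal_ofReal (integral_nonneg (hf_nonneg m))

lemma measureReal_poissonMeasure_mul_gaussianPDFReal (r : ℝ≥0) (m : ℕ) (a : ℝ) (v : ℝ≥0)
    (x : ℝ) :
    (poissonMeasure r).real {m} * gaussianPDFReal a v x
      = exp (-r) * (r ^ m / (m.factorial * √(2 * π * v)) * exp (-(x - a) ^ 2 / (2 * v))) := by
  rw [poissonMeasure_real_singleton, gaussianPDFReal]
  ring

theorem stmt4_general
    {Ω : Type*} [MeasurableSpace Ω] (Q : Measure Ω) [IsProbabilityMeasure Q]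
    (γ μ σ δ lam t : ℝ) (hσ : 0 < σ) (hlam : 0 < lam) (ht : 0 < t)
    (W : Ω → ℝ) (N : Ω → ℕ) (Y : ℕ → Ω → ℝ)
    (hW : Measure.map W Q = gaussianReal 0 (t).toNNReal)
    (hN : Measure.map N Q = poissonMeasure (lam * t).toNNReal)
    (hY : ∀ j, Measure.map (Y j) Q = gaussianReal μ (δ ^ 2).toNNReal)
    (hIndep : iIndepFun (m := JDTy.instMeasurableSpace) (JDFam W N Y) Q)
    (X : Ω → ℝ) (hX : ∀ ω, X ω = γ * t + σ * W ω + ∑ j ∈ Finset.range (N ω), Y j ω)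
    : ∀ A : Set ℝ, MeasurableSet A →
      (Q (X ⁻¹' A)).toReal =
        ∫ x in A, Real.exp (-(lam * t)) * ∑' m : ℕ,
          (lam * t) ^ m / ((m.factorial : ℝ) * Real.sqrt (2 * Real.pi * (σ ^ 2 * t + m * δ ^ 2)))
            * Real.exp (-(x - γ * t - m * μ) ^ 2 / (2 * (σ ^ 2 * t + m * δ ^ 2))) := by
  intro A hA
  set v : ℕ → ℝ≥0 := fun m ↦ .mk (σ ^ 2) (sq_nonneg σ) * t.toNNReal + m * (δ ^ 2).toNNReal
  have hv : ∀ m, (v m : ℝ) = σ ^ 2 * t + m * δ ^ 2 := fun m ↦ by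
    simp only [v, NNReal.coe_add, NNReal.coe_mul, NNReal.coe_mk, NNReal.coe_natCast,
      Real.coe_toNNReal _ ht.le, Real.coe_toNNReal _ (sq_nonneg δ)]
  have hv_ne : ∀ m, v m ≠ 0 := fun m ↦ by
    rw [← NNReal.coe_ne_zero, hv]
    positivity
  have hWl := hasLaw_of_map_eq hW
  have hNl := hasLaw_of_map_eq hN
  have hYl := fun j ↦ hasLaw_of_map_eq (hY j)
  have hind := JDFam.indepFun_sum_range hIndep hWl.aemeasurable hNl.aemeasurable
    (fun j ↦ (hYl j).aemeasurable) (γ * t) σ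
  have hZ (m : ℕ) : HasLaw (fun ω ↦ γ * t + σ * W ω + ∑ j ∈ range m, Y j ω)
      (gaussianReal (γ * t + m * μ) (v m)) Q := by
    simpa [v] using hasLaw_add_sum_range_gaussianReal
      (gaussianReal_const_add (gaussianReal_const_mul hWl σ) (γ * t)) hYl (fun m ↦ (hind m).1) m
  rw [measure_preimage_eq_tsum_of_indepFun hNl.aemeasurable (fun m ↦ (hZ m).aemeasurable)
    (fun m ↦ (hind m).2) hX hA]
  simp_rw [hN, (hZ _).map_eq]
  rw [toReal_tsum_mul_gaussianReal _ _ hv_ne]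
  congr with x
  rw [← tsum_mul_left]
  congr with m
  rw [measureReal_poissonMeasure_mul_gaussianPDFReal, hv, Real.coe_toNNReal _ (by positivity),
    sub_sub, mul_assoc]

/-- series representation of the distribution of `X t` (normal jumps). -/
theorem stmt4
    {Ω : Type*} [MeasurableSpace Ω] (Q : Measure Ω) [IsProbabilityMeasure Q]
    (γ μ σ δ lam t : ℝ) (hσ : 0 < σ) (hδ : 0 < δ) (hlam : 0 < lam) (ht : 0 < t)
    (W : Ω → ℝ) (N : Ω → ℕ) (Y : ℕ → Ω → ℝ)
    (hW : Measure.map W Q = gaussianReal 0 (t).toNNReal)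
    (hN : Measure.map N Q = poissonMeasure (lam * t).toNNReal)
    (hY : ∀ j, Measure.map (Y j) Q = gaussianReal μ (δ ^ 2).toNNReal)
    (hIndep : iIndepFun (m := JDTy.instMeasurableSpace) (JDFam W N Y) Q)
    (X : Ω → ℝ) (hX : ∀ ω, X ω = γ * t + σ * W ω + ∑ j ∈ Finset.range (N ω), Y j ω)
    : ∀ A : Set ℝ, MeasurableSet A →
      (Q (X ⁻¹' A)).toReal =
        ∫ x in A, Real.exp (-(lam * t)) * ∑' m : ℕ,
          (lam * t) ^ m / ((m.factorial : ℝ) * Real.sqrt (2 * Real.pi * (σ ^ 2 * t + m * δ ^ 2)))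
            * Real.exp (-(x - γ * t - m * μ) ^ 2 / (2 * (σ ^ 2 * t + m * δ ^ 2))) :=
  stmt4_general Q γ μ σ δ lam t hσ hlam ht W N Y hW hN hY hIndep X hX
end
end

section
/- The law of X_t under Q is absolutely continuous with respect to Lebesgue measure, with probability density function f_{X_t}(x) = e^{−λt} Σ_{m=0}^∞ ( (λt)^m / ( m! √(2π(σ²t + mδ²)) ) ) · exp( −(x − γt − mμ)² / (2(σ²t + mδ²)) ); that is, the law of X_t equals Lebesgue measure with density f_{X_t}. -/
open MeasureTheory ProbabilityTheory

noncomputable section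

/-!
Conditionally on `N = m`, `X_t = γt + σW + Y₀ + ⋯ + Y_{m-1}` is a sum of independent Gaussians,
hence Gaussian with mean `γt + mμ` and variance `σ²t + mδ²`. Since `N` is independent of
`(W, Y)`, the law of `X_t` is the Poisson mixture of these Gaussian laws, and its density is the
corresponding mixture of Gaussian densities; the series converges because every variance is at
least `σ²t`.
-/

open Real
open scoped NNReal ENNReal

section Mixture

variable {Ω β : Type*} [MeasurableSpace Ω] [MeasurableSpace β] {Q : Measure Ω}

lemma measurable_eval_index {N : Ω → ℕ} {T : ℕ → Ω → β} (hN : Measurable N)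
    (hT : ∀ m, Measurable (T m)) : Measurable fun ω => T (N ω) ω :=
  (measurable_from_prod_countable_right (f := fun p : ℕ × Ω => T p.1 p.2) hT).comp
    (hN.prodMk measurable_id)

lemma map_eval_index_eq_sum {N : Ω → ℕ} {T : ℕ → Ω → β} (hN : Measurable N)
    (hT : ∀ m, Measurable (T m)) (hind : ∀ m, IndepFun N (T m) Q) :
    Q.map (fun ω => T (N ω) ω) = Measure.sum fun m => Q.map N {m} • Q.map (T m) := by
  ext s hs
  have hpre : (fun ω => T (N ω) ω) ⁻¹' s = ⋃ m, N ⁻¹' {m} ∩ T m ⁻¹' s := by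
    ext ω
    simp [eq_comm]
  rw [Measure.map_apply (measurable_eval_index hN hT) hs, hpre, Measure.sum_apply _ hs,
    measure_iUnion]
  · congr with m
    rw [Measure.smul_apply, smul_eq_mul, Measure.map_apply hN (measurableSet_singleton m),
      Measure.map_apply (hT m) hs]
    exact (hind m).measure_inter_preimage_eq_mul _ _ (measurableSet_singleton m) hs
  · exact fun m k hmk => Set.disjoint_left.mpr fun ω hm hk => hmk (hm.1.symm.trans hk.1)
  · exact fun m => (hN (measurableSet_singleton m)).inter (hT m hs)

end Mixture

lemma gaussianPDFReal_le_of_le (μ x : ℝ) {v₀ v : ℝ≥0} (hv₀ : v₀ ≠ 0) (hv : v₀ ≤ v) :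
    gaussianPDFReal μ v x ≤ (√(2 * π * v₀))⁻¹ := by
  calc gaussianPDFReal μ v x ≤ (√(2 * π * v))⁻¹ * 1 := by
        rw [gaussianPDFReal]
        gcongr
        exact exp_le_one_iff.mpr
          (div_nonpos_of_nonpos_of_nonneg (neg_nonpos.mpr (sq_nonneg _)) (by positivity))
    _ ≤ (√(2 * π * v₀))⁻¹ := by
        rw [mul_one]
        gcongr

lemma sum_smul_gaussianReal_eq_withDensity {p : ℕ → ℝ} (hp0 : ∀ m, 0 ≤ p m) (hp : Summable p)
    (a : ℕ → ℝ) {v : ℕ → ℝ≥0} {v₀ : ℝ≥0} (hv₀ : v₀ ≠ 0) (hv : ∀ m, v₀ ≤ v m) :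
    Measure.sum (fun m => ENNReal.ofReal (p m) • gaussianReal (a m) (v m)) =
      volume.withDensity fun x => ENNReal.ofReal (∑' m, p m * gaussianPDFReal (a m) (v m) x) := by
  have hv0 : ∀ m, v m ≠ 0 := fun m => ne_bot_of_le_ne_bot hv₀ (hv m)
  simp_rw [gaussianReal_of_var_ne_zero _ (hv0 _),
    ← withDensity_smul _ (measurable_gaussianPDF _ _)]
  rw [← withDensity_tsum fun m => (measurable_gaussianPDF _ _).const_smul _]
  congr with x
  have hterm0 : ∀ m, 0 ≤ p m * gaussianPDFReal (a m) (v m) x :=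
    fun m => mul_nonneg (hp0 m) (gaussianPDFReal_nonneg _ _ _)
  have hsum : Summable fun m => p m * gaussianPDFReal (a m) (v m) x :=
    (hp.mul_right (√(2 * π * v₀))⁻¹).of_nonneg_of_le hterm0 fun m =>
      mul_le_mul_of_nonneg_left (gaussianPDFReal_le_of_le _ _ hv₀ (hv m)) (hp0 m)
  rw [ENNReal.ofReal_tsum_of_nonneg hterm0 hsum, ENNReal.tsum_apply]
  simp_rw [ENNReal.ofReal_mul (hp0 _), Pi.smul_apply, smul_eq_mul, gaussianPDF]

section Independence

variable {Ω ι : Type*} {β : ι → Type*} {mβ : ∀ i, MeasurableSpace (β i)} {f : ∀ i, Ω → β i}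

lemma measurable_iSup_comap_of_mem {S : Set ι} {i : ι} (hi : i ∈ S) :
    Measurable[⨆ j ∈ S, (mβ j).comap (f j)] (f i) :=
  measurable_iff_comap_le.mpr (le_iSup₂ (f := fun j (_ : j ∈ S) => (mβ j).comap (f j)) i hi)

variable [MeasurableSpace Ω] {Q : Measure Ω}

lemma ProbabilityTheory.iIndepFun.indepFun_of_measurable_iSup (hf : iIndepFun f Q)
    (hfm : ∀ i, Measurable (f i)) {S T : Set ι} (hST : Disjoint S T) {α α' : Type*}
    [MeasurableSpace α] [MeasurableSpace α']
    {g : Ω → α} {h : Ω → α'} (hg : Measurable[⨆ i ∈ S, (mβ i).comap (f i)] g)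
    (hh : Measurable[⨆ i ∈ T, (mβ i).comap (f i)] h) : IndepFun g h Q := by
  rw [IndepFun_iff_Indep]
  exact indep_of_indep_of_le_right (indep_of_indep_of_le_left
    (indep_iSup_of_disjoint (fun i => (hfm i).comap_le) hf.iIndep hST) hg.comap_le) hh.comap_le

end Independence

section JumpDiffusion

variable {Ω : Type*} {W : Ω → ℝ} {N : Ω → ℕ} {Y : ℕ → Ω → ℝ}

lemma measurable_partialSum_iSup (c σ : ℝ) (m : ℕ) :
    Measurable[⨆ i ∈ {i | i = Sum.inl () ∨ ∃ j < m, i = Sum.inr (Sum.inr j)},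
        (JDTy.instMeasurableSpace i).comap (JDFam W N Y i)]
      (fun ω => c + σ * W ω + ∑ j ∈ Finset.range m, Y j ω) := by
  set 𝓕 : MeasurableSpace Ω := ⨆ i ∈ {i | i = Sum.inl () ∨ ∃ j < m, i = Sum.inr (Sum.inr j)},
    (JDTy.instMeasurableSpace i).comap (JDFam W N Y i)
  have hW : Measurable[𝓕] W :=
    measurable_iSup_comap_of_mem (f := JDFam W N Y) (i := Sum.inl ()) (by simp)
  have hY : ∀ j < m, Measurable[𝓕] (Y j) := fun j hj =>
    measurable_iSup_comap_of_mem (f := JDFam W N Y) (i := Sum.inr (Sum.inr j))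
      (by simpa using hj)
  exact ((hW.const_mul σ).const_add c).add
    (Finset.measurable_sum _ fun j hj => hY j (Finset.mem_range.mp hj))

variable [MeasurableSpace Ω] {Q : Measure Ω}

lemma measurable_JDFam (hWm : Measurable W) (hNm : Measurable N) (hYm : ∀ j, Measurable (Y j)) :
    ∀ i, Measurable (JDFam W N Y i)
  | Sum.inl _ => hWm
  | Sum.inr (Sum.inl _) => hNm
  | Sum.inr (Sum.inr j) => hYm j

variable (hWm : Measurable W) (hNm : Measurable N) (hYm : ∀ j, Measurable (Y j))
  (hIndep : iIndepFun (m := JDTy.instMeasurableSpace) (JDFam W N Y) Q)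
include hWm hNm hYm hIndep

lemma indepFun_partialSum_jump (c σ : ℝ) (m : ℕ) :
    IndepFun (fun ω => c + σ * W ω + ∑ j ∈ Finset.range m, Y j ω) (Y m) Q :=
  hIndep.indepFun_of_measurable_iSup (measurable_JDFam hWm hNm hYm) (by simp)
    (measurable_partialSum_iSup c σ m)
    (measurable_iSup_comap_of_mem (f := JDFam W N Y) (i := Sum.inr (Sum.inr m))
      (Set.mem_singleton _))

lemma indepFun_count_partialSum (c σ : ℝ) (m : ℕ) :
    IndepFun N (fun ω => c + σ * W ω + ∑ j ∈ Finset.range m, Y j ω) Q :=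
  hIndep.indepFun_of_measurable_iSup (measurable_JDFam hWm hNm hYm) (by simp)
    (measurable_iSup_comap_of_mem (f := JDFam W N Y) (i := Sum.inr (Sum.inl ()))
      (Set.mem_singleton _))
    (measurable_partialSum_iSup c σ m)

lemma map_partialSum_eq_gaussianReal {μ δ t : ℝ} (ht : 0 ≤ t)
    (hW : Q.map W = gaussianReal 0 t.toNNReal)
    (hY : ∀ j, Q.map (Y j) = gaussianReal μ (δ ^ 2).toNNReal)
    (c σ : ℝ) (m : ℕ) :
    Q.map (fun ω => c + σ * W ω + ∑ j ∈ Finset.range m, Y j ω)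
      = gaussianReal (c + m * μ) (σ ^ 2 * t + m * δ ^ 2).toNNReal := by
  induction m with
  | zero =>
    have h : (fun ω => c + σ * W ω + ∑ j ∈ Finset.range 0, Y j ω) = (c + ·) ∘ (σ * ·) ∘ W := by
      ext; simp
    rw [h, ← Measure.map_map (measurable_const_add c) ((measurable_const_mul σ).comp hWm),
      ← Measure.map_map (measurable_const_mul σ) hWm, hW, gaussianReal_map_const_mul,
      gaussianReal_map_const_add]
    congr 1
    · simp
    · ext
      simp [ht, mul_nonneg (sq_nonneg σ) ht]
  | succ m ih =>
    have h : (fun ω => c + σ * W ω + ∑ j ∈ Finset.range (m + 1), Y j ω)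
        = (fun ω => c + σ * W ω + ∑ j ∈ Finset.range m, Y j ω) + Y m := by
      ext; simp [Finset.sum_range_succ, add_assoc]
    rw [h, gaussianReal_add_gaussianReal_of_indepFun
      (indepFun_partialSum_jump hWm hNm hYm hIndep c σ m) ih (hY m)]
    congr 1
    · push_cast; ring
    · rw [← Real.toNNReal_add (by positivity) (by positivity)]
      push_cast; ring_nf

lemma map_jumpDiffusion_eq_sum_of_measurable {μ δ t : ℝ} (ht : 0 ≤ t)
    (hW : Q.map W = gaussianReal 0 t.toNNReal)
    (hY : ∀ j, Q.map (Y j) = gaussianReal μ (δ ^ 2).toNNReal)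
    (c σ : ℝ) :
    Q.map (fun ω => c + σ * W ω + ∑ j ∈ Finset.range (N ω), Y j ω) = Measure.sum fun m =>
      Q.map N {m} • gaussianReal (c + m * μ) (σ ^ 2 * t + m * δ ^ 2).toNNReal := by
  simp_rw [← map_partialSum_eq_gaussianReal hWm hNm hYm hIndep ht hW hY c σ]
  exact map_eval_index_eq_sum (T := fun m ω => c + σ * W ω + ∑ j ∈ Finset.range m, Y j ω) hNm
    (fun m => ((hWm.const_mul σ).const_add c).add (Finset.measurable_sum _ fun j _ => hYm j))
    (indepFun_count_partialSum hWm hNm hYm hIndep c σ)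

omit hWm hNm hYm hIndep

lemma map_jumpDiffusion_eq_sum {μ δ t : ℝ} (ht : 0 ≤ t)
    (hW : Q.map W = gaussianReal 0 t.toNNReal) (hN : AEMeasurable N Q)
    (hY : ∀ j, Q.map (Y j) = gaussianReal μ (δ ^ 2).toNNReal)
    (hIndep : iIndepFun (m := JDTy.instMeasurableSpace) (JDFam W N Y) Q) (c σ : ℝ) :
    Q.map (fun ω => c + σ * W ω + ∑ j ∈ Finset.range (N ω), Y j ω) = Measure.sum fun m =>
      Q.map N {m} • gaussianReal (c + m * μ) (σ ^ 2 * t + m * δ ^ 2).toNNReal := by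
  have hWa : AEMeasurable W Q := .of_map_ne_zero (by simp [hW, NeZero.ne])
  have hYa : ∀ j, AEMeasurable (Y j) Q := fun j => .of_map_ne_zero (by simp [hY, NeZero.ne])
  have hYae : ∀ᵐ ω ∂Q, ∀ j, Y j ω = (hYa j).mk _ ω := ae_all_iff.mpr fun j => (hYa j).ae_eq_mk
  have hsum : (fun ω => c + σ * W ω + ∑ j ∈ Finset.range (N ω), Y j ω) =ᵐ[Q]
      fun ω => c + σ * hWa.mk W ω + ∑ j ∈ Finset.range (hN.mk N ω), (hYa j).mk _ ω := by
    filter_upwards [hWa.ae_eq_mk, hN.ae_eq_mk, hYae] with ω hWω hNω hYω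
    simp only [hWω, hNω, hYω]
  rw [Measure.map_congr hsum, Measure.map_congr hN.ae_eq_mk]
  refine map_jumpDiffusion_eq_sum_of_measurable hWa.measurable_mk hN.measurable_mk
    (fun j => (hYa j).measurable_mk) ?_ ht ?_ ?_ c σ
  · refine (iIndepFun_congr ?_).mp hIndep
    rintro (_ | _ | j)
    exacts [hWa.ae_eq_mk, hN.ae_eq_mk, (hYa j).ae_eq_mk]
  · rwa [← Measure.map_congr hWa.ae_eq_mk]
  · exact fun j => (Measure.map_congr (hYa j).ae_eq_mk).symm.trans (hY j)

end JumpDiffusion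

theorem stmt5_general
    {Ω : Type*} [MeasurableSpace Ω] (Q : Measure Ω)
    (γ μ σ δ lam t : ℝ) (hσ : 0 < σ) (hlam : 0 < lam) (ht : 0 < t)
    (W : Ω → ℝ) (N : Ω → ℕ) (Y : ℕ → Ω → ℝ)
    (hW : Measure.map W Q = gaussianReal 0 (t).toNNReal)
    (hN : Measure.map N Q = poissonMeasure (lam * t).toNNReal)
    (hY : ∀ j, Measure.map (Y j) Q = gaussianReal μ (δ ^ 2).toNNReal)
    (hIndep : iIndepFun (m := JDTy.instMeasurableSpace) (JDFam W N Y) Q)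
    (X : Ω → ℝ) (hX : ∀ ω, X ω = γ * t + σ * W ω + ∑ j ∈ Finset.range (N ω), Y j ω)
    : Measure.map X Q = volume.withDensity (fun x => ENNReal.ofReal (
        Real.exp (-(lam * t)) * ∑' m : ℕ,
          (lam * t) ^ m / ((m.factorial : ℝ) * Real.sqrt (2 * Real.pi * (σ ^ 2 * t + m * δ ^ 2)))
            * Real.exp (-(x - γ * t - m * μ) ^ 2 / (2 * (σ ^ 2 * t + m * δ ^ 2))))) := by
  have hNa : AEMeasurable N Q := .of_map_ne_zero (by simp [hN, NeZero.ne])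
  have hv₀ : (σ ^ 2 * t).toNNReal ≠ 0 := (Real.toNNReal_pos.mpr (by positivity)).ne'
  have hv : ∀ m : ℕ, (σ ^ 2 * t).toNNReal ≤ (σ ^ 2 * t + m * δ ^ 2).toNNReal := fun m =>
    Real.toNNReal_le_toNNReal (le_add_of_nonneg_right (by positivity))
  rw [show X = _ from funext hX, map_jumpDiffusion_eq_sum ht.le hW hNa hY hIndep, hN]
  simp_rw [poissonMeasure_singleton]
  rw [sum_smul_gaussianReal_eq_withDensity (fun m => by positivity)
    (hasSum_one_poissonMeasure _).summable _ hv₀ hv]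
  congr with x
  rw [← tsum_mul_left]
  congr with m
  have hV : 0 ≤ σ ^ 2 * t + m * δ ^ 2 := by positivity
  simp only [gaussianPDFReal, Real.coe_toNNReal _ hV,
    Real.coe_toNNReal _ (by positivity : 0 ≤ lam * t)]
  rw [← sub_sub]
  ring

/-- the law of `X t` is Lebesgue-absolutely continuous with the series density. -/
theorem stmt5
    {Ω : Type*} [MeasurableSpace Ω] (Q : Measure Ω) [IsProbabilityMeasure Q]
    (γ μ σ δ lam t : ℝ) (hσ : 0 < σ) (hδ : 0 < δ) (hlam : 0 < lam) (ht : 0 < t)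
    (W : Ω → ℝ) (N : Ω → ℕ) (Y : ℕ → Ω → ℝ)
    (hW : Measure.map W Q = gaussianReal 0 (t).toNNReal)
    (hN : Measure.map N Q = poissonMeasure (lam * t).toNNReal)
    (hY : ∀ j, Measure.map (Y j) Q = gaussianReal μ (δ ^ 2).toNNReal)
    (hIndep : iIndepFun (m := JDTy.instMeasurableSpace) (JDFam W N Y) Q)
    (X : Ω → ℝ) (hX : ∀ ω, X ω = γ * t + σ * W ω + ∑ j ∈ Finset.range (N ω), Y j ω)
    : Measure.map X Q = volume.withDensity (fun x => ENNReal.ofReal (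
        Real.exp (-(lam * t)) * ∑' m : ℕ,
          (lam * t) ^ m / ((m.factorial : ℝ) * Real.sqrt (2 * Real.pi * (σ ^ 2 * t + m * δ ^ 2)))
            * Real.exp (-(x - γ * t - m * μ) ^ 2 / (2 * (σ ^ 2 * t + m * δ ^ 2))))) :=
  stmt5_general Q γ μ σ δ lam t hσ hlam ht W N Y hW hN hY hIndep X hX
end
end

section
/- Let S be an integrable real-valued random variable on a probability space (Ω, 𝒢, Q). Then E_Q[|S|] = (2/π) ∫_0^∞ ( 1 − Re( E_Q[e^{i x S}] ) ) / x² dx. -/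
/-!
For `a : ℝ`, `∫₀^∞ (1 - cos (a x)) / x² dx = π |a| / 2`: writing `1 / x² = ∫₀^∞ t e^{-x t} dt` and
swapping the integrals (Tonelli) turns the left side into `∫₀^∞ a² / (t² + a²) dt`, by the Laplace
transform `∫₀^∞ e^{-t x} cos (a x) dx = t / (t² + a²)`. Integrating against the law of `S` and
applying Tonelli once more gives the formula. All integrands are nonnegative, so the computation is
done with lower Lebesgue integrals and needs no integrability of `S`.
-/

open MeasureTheory ProbabilityTheory Real Set

lemma integral_mul_exp_neg_mul_Ioi {x : ℝ} (hx : 0 < x) :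
    ∫ t in Ioi (0 : ℝ), t * exp (-(x * t)) = 1 / x ^ 2 := by
  have h := integral_rpow_mul_exp_neg_mul_Ioi two_pos hx
  rw [Gamma_two, mul_one, rpow_two, one_div_pow, show (2 : ℝ) - 1 = 1 by norm_num] at h
  simpa only [rpow_one] using h

lemma integrableOn_mul_exp_neg_mul_Ioi {x : ℝ} (hx : 0 < x) :
    IntegrableOn (fun t ↦ t * exp (-(x * t))) (Ioi 0) :=
  .of_integral_ne_zero (by rw [integral_mul_exp_neg_mul_Ioi hx]; positivity)

lemma integrableOn_exp_neg_mul_Ioi {t : ℝ} (ht : 0 < t) :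
    IntegrableOn (fun x ↦ exp (-(t * x))) (Ioi 0) := by
  simpa only [neg_mul] using exp_neg_integrableOn_Ioi 0 ht

lemma re_exp_mul_neg_add_mul_I (a t x : ℝ) :
    (Complex.exp ((-t + a * Complex.I) * x)).re = exp (-(t * x)) * cos (a * x) := by
  rw [Complex.exp_re]
  simp [mul_comm]

lemma integrableOn_exp_neg_mul_mul_cos_Ioi (a : ℝ) {t : ℝ} (ht : 0 < t) :
    IntegrableOn (fun x ↦ exp (-(t * x)) * cos (a * x)) (Ioi 0) := by
  have h := (integrableOn_exp_mul_complex_Ioi (a := -t + a * Complex.I) (by simpa) 0).re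
  simp only [RCLike.re_to_complex, re_exp_mul_neg_add_mul_I] at h
  exact h

lemma integral_exp_neg_mul_mul_cos_Ioi (a : ℝ) {t : ℝ} (ht : 0 < t) :
    ∫ x in Ioi (0 : ℝ), exp (-(t * x)) * cos (a * x) = t / (t ^ 2 + a ^ 2) := by
  have h := integral_exp_mul_complex_Ioi (a := -t + a * Complex.I) (by simpa) 0
  have hre := congrArg Complex.re h
  rw [← Complex.reCLM_apply, ← Complex.reCLM.integral_comp_comm
    (integrableOn_exp_mul_complex_Ioi (by simpa) 0)] at hre
  simp only [Complex.reCLM_apply, re_exp_mul_neg_add_mul_I] at hre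
  rw [hre]
  simp [Complex.div_re, Complex.normSq_apply, sq]

lemma integrableOn_exp_neg_mul_mul_one_sub_cos_Ioi (a : ℝ) {t : ℝ} (ht : 0 < t) :
    IntegrableOn (fun x ↦ exp (-(t * x)) * (1 - cos (a * x))) (Ioi 0) := by
  simp only [mul_sub, mul_one]
  exact (integrableOn_exp_neg_mul_Ioi ht).sub (integrableOn_exp_neg_mul_mul_cos_Ioi a ht)

lemma integral_exp_neg_mul_mul_one_sub_cos_Ioi (a : ℝ) {t : ℝ} (ht : 0 < t) :
    ∫ x in Ioi (0 : ℝ), exp (-(t * x)) * (1 - cos (a * x)) = a ^ 2 / (t * (t ^ 2 + a ^ 2)) := by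
  have h0 := integral_exp_neg_mul_mul_cos_Ioi 0 ht
  simp only [zero_mul, cos_zero, mul_one] at h0
  simp only [mul_sub, mul_one]
  rw [integral_sub (integrableOn_exp_neg_mul_Ioi ht) (integrableOn_exp_neg_mul_mul_cos_Ioi a ht),
    h0, integral_exp_neg_mul_mul_cos_Ioi a ht]
  field_simp
  ring

lemma integral_sq_div_sq_add_sq_Ioi {a : ℝ} (ha : 0 < a) :
    ∫ t in Ioi (0 : ℝ), a ^ 2 / (t ^ 2 + a ^ 2) = π / 2 * a := by
  have h := integral_comp_mul_left_Ioi (fun t ↦ a ^ 2 / (t ^ 2 + a ^ 2)) 0 ha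
  have hg : ∀ x : ℝ, a ^ 2 / ((a * x) ^ 2 + a ^ 2) = (1 + x ^ 2)⁻¹ := fun x ↦ by
    field_simp; ring
  simp only [hg, mul_zero, integral_Ioi_inv_one_add_sq, arctan_zero, sub_zero, smul_eq_mul] at h
  field_simp at h
  linarith

lemma lintegral_one_sub_cos_mul_div_sq_of_pos {a : ℝ} (ha : 0 < a) :
    ∫⁻ x in Ioi (0 : ℝ), ENNReal.ofReal ((1 - cos (a * x)) / x ^ 2)
      = ENNReal.ofReal (π / 2 * a) := by
  set K : ℝ → ℝ → ℝ := fun x t ↦ (1 - cos (a * x)) * (t * exp (-(x * t))) with hK_def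
  have one_sub_cos_nonneg (x : ℝ) : 0 ≤ 1 - cos (a * x) := sub_nonneg.2 (cos_le_one _)
  have hK_nonneg (x : ℝ) {t : ℝ} (ht : 0 < t) : 0 ≤ K x t := by
    have := one_sub_cos_nonneg x
    positivity
  have hK : Measurable (Function.uncurry fun x t ↦ ENNReal.ofReal (K x t)) := by
    fun_prop
  have lintegral_dt : ∀ x ∈ Ioi (0 : ℝ),
      ∫⁻ t in Ioi 0, ENNReal.ofReal (K x t) = ENNReal.ofReal ((1 - cos (a * x)) / x ^ 2) := by
    intro x (hx : 0 < x)
    rw [← ofReal_integral_eq_lintegral_ofReal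
      ((integrableOn_mul_exp_neg_mul_Ioi hx).const_mul _)
      ((ae_restrict_mem measurableSet_Ioi).mono fun t ht ↦ hK_nonneg x ht),
      integral_const_mul, integral_mul_exp_neg_mul_Ioi hx, mul_one_div]
  have lintegral_dx : ∀ t ∈ Ioi (0 : ℝ),
      ∫⁻ x in Ioi 0, ENNReal.ofReal (K x t) = ENNReal.ofReal (a ^ 2 / (t ^ 2 + a ^ 2)) := by
    intro t (ht : 0 < t)
    have hK_eq : (fun x ↦ K x t) = fun x ↦ t * (exp (-(t * x)) * (1 - cos (a * x))) := by
      ext x; simp only [hK_def, mul_comm x t]; ring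
    rw [← ofReal_integral_eq_lintegral_ofReal (by
      rw [hK_eq]; exact (integrableOn_exp_neg_mul_mul_one_sub_cos_Ioi a ht).const_mul t)
      (ae_of_all _ fun x ↦ hK_nonneg x ht), hK_eq, integral_const_mul,
      integral_exp_neg_mul_mul_one_sub_cos_Ioi a ht]
    congr 1
    field_simp [ht.ne']
  have lintegral_sq_div : ∫⁻ t in Ioi (0 : ℝ), ENNReal.ofReal (a ^ 2 / (t ^ 2 + a ^ 2))
      = ENNReal.ofReal (π / 2 * a) := by
    rw [← integral_sq_div_sq_add_sq_Ioi ha]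
    exact (ofReal_integral_eq_lintegral_ofReal (.of_integral_ne_zero (by
      rw [integral_sq_div_sq_add_sq_Ioi ha]; positivity)) (ae_of_all _ fun t ↦ by positivity)).symm
  calc ∫⁻ x in Ioi (0 : ℝ), ENNReal.ofReal ((1 - cos (a * x)) / x ^ 2)
      = ∫⁻ x in Ioi (0 : ℝ), ∫⁻ t in Ioi 0, ENNReal.ofReal (K x t) :=
        (setLIntegral_congr_fun measurableSet_Ioi lintegral_dt).symm
    _ = ∫⁻ t in Ioi (0 : ℝ), ∫⁻ x in Ioi 0, ENNReal.ofReal (K x t) :=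
        lintegral_lintegral_swap hK.aemeasurable
    _ = ENNReal.ofReal (π / 2 * a) := by
        rw [setLIntegral_congr_fun measurableSet_Ioi lintegral_dx, lintegral_sq_div]

theorem lintegral_one_sub_cos_mul_div_sq (a : ℝ) :
    ∫⁻ x in Ioi (0 : ℝ), ENNReal.ofReal ((1 - cos (x * a)) / x ^ 2)
      = ENNReal.ofReal (π / 2 * |a|) := by
  rcases eq_or_ne a 0 with rfl | ha
  · simp
  have h_cos (x : ℝ) : cos (x * a) = cos (|a| * x) := by
    rcases abs_choice a with h | h <;> simp [h, mul_comm]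
  simp only [h_cos]
  exact lintegral_one_sub_cos_mul_div_sq_of_pos (abs_pos.2 ha)

lemma one_sub_cos_mul_div_sq_nonneg (x y : ℝ) : 0 ≤ (1 - cos (x * y)) / x ^ 2 :=
  div_nonneg (sub_nonneg.2 (cos_le_one _)) (sq_nonneg x)

section CharFun

variable (μ : Measure ℝ)

lemma integrable_cos_mul [IsFiniteMeasure μ] (x : ℝ) : Integrable (fun y ↦ cos (x * y)) μ :=
  .of_bound (by fun_prop) 1 (ae_of_all _ fun y ↦ by simpa using abs_cos_le_one (x * y))

lemma re_charFun_eq_integral_cos [IsFiniteMeasure μ] (x : ℝ) :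
    (charFun μ x).re = ∫ y, cos (x * y) ∂μ := by
  have h_int : Integrable (fun y : ℝ ↦ Complex.exp (x * y * Complex.I)) μ :=
    .of_bound (by fun_prop) 1
      (ae_of_all _ fun y ↦ by rw [← Complex.ofReal_mul, Complex.norm_exp_ofReal_mul_I])
  rw [charFun_apply_real, ← Complex.reCLM_apply, ← Complex.reCLM.integral_comp_comm h_int]
  push_cast [Complex.reCLM_apply]
  simp_rw [← Complex.ofReal_mul, Complex.exp_ofReal_mul_I_re]

variable [IsProbabilityMeasure μ]

lemma one_sub_re_charFun_div_sq_eq_integral (x : ℝ) :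
    (1 - (charFun μ x).re) / x ^ 2 = ∫ y, (1 - cos (x * y)) / x ^ 2 ∂μ := by
  rw [integral_div, integral_sub (integrable_const 1) (integrable_cos_mul μ x),
    re_charFun_eq_integral_cos, integral_const, probReal_univ, one_smul]

theorem lintegral_one_sub_re_charFun_div_sq :
    ∫⁻ x in Ioi (0 : ℝ), ENNReal.ofReal ((1 - (charFun μ x).re) / x ^ 2)
      = ENNReal.ofReal (π / 2) * ∫⁻ y, ENNReal.ofReal |y| ∂μ := by
  have h_meas : Measurable (Function.uncurry fun x y : ℝ ↦
      ENNReal.ofReal ((1 - cos (x * y)) / x ^ 2)) := by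
    fun_prop
  calc ∫⁻ x in Ioi (0 : ℝ), ENNReal.ofReal ((1 - (charFun μ x).re) / x ^ 2)
      = ∫⁻ x in Ioi (0 : ℝ), ∫⁻ y, ENNReal.ofReal ((1 - cos (x * y)) / x ^ 2) ∂μ := by
        refine lintegral_congr fun x ↦ ?_
        have h_int : Integrable (fun y ↦ (1 - cos (x * y)) / x ^ 2) μ :=
          ((integrable_const 1).sub (integrable_cos_mul μ x)).div_const _
        rw [one_sub_re_charFun_div_sq_eq_integral,
          ofReal_integral_eq_lintegral_ofReal h_int (ae_of_all _ (one_sub_cos_mul_div_sq_nonneg x))]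
    _ = ∫⁻ y, (∫⁻ x in Ioi (0 : ℝ), ENNReal.ofReal ((1 - cos (x * y)) / x ^ 2)) ∂μ :=
        lintegral_lintegral_swap h_meas.aemeasurable
    _ = ∫⁻ y, ENNReal.ofReal (π / 2) * ENNReal.ofReal |y| ∂μ := by
        simp_rw [lintegral_one_sub_cos_mul_div_sq, ENNReal.ofReal_mul (by positivity : 0 ≤ π / 2)]
    _ = ENNReal.ofReal (π / 2) * ∫⁻ y, ENNReal.ofReal |y| ∂μ :=
        lintegral_const_mul _ (by fun_prop)

theorem integral_abs_eq_two_div_pi_mul_integral_one_sub_re_charFun :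
    ∫ y, |y| ∂μ = 2 / π * ∫ x in Ioi (0 : ℝ), (1 - (charFun μ x).re) / x ^ 2 := by
  have h_nonneg (x : ℝ) : 0 ≤ (1 - (charFun μ x).re) / x ^ 2 := by
    rw [one_sub_re_charFun_div_sq_eq_integral]
    exact integral_nonneg (one_sub_cos_mul_div_sq_nonneg x)
  rw [integral_eq_lintegral_of_nonneg_ae (ae_of_all _ fun y ↦ abs_nonneg y) (by fun_prop),
    integral_eq_lintegral_of_nonneg_ae (ae_of_all _ h_nonneg)
      (Measurable.aestronglyMeasurable (by fun_prop)),
    lintegral_one_sub_re_charFun_div_sq, ENNReal.toReal_mul, ENNReal.toReal_ofReal (by positivity)]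
  field_simp

end CharFun

/-- the expectation of `|S|` via the characteristic function of `S`. -/
theorem stmt8 {Ω : Type*} [MeasurableSpace Ω] (Q : Measure Ω) [IsProbabilityMeasure Q]
    (S : Ω → ℝ) (hS : Integrable S Q) :
    ∫ ω, |S ω| ∂Q
      = (2 / Real.pi) * ∫ x in Set.Ioi (0 : ℝ),
          (1 - (∫ ω, Complex.exp (Complex.I * x * S ω) ∂Q).re) / x ^ 2 := by
  have hS_meas : AEMeasurable S Q := hS.aemeasurable
  have : IsProbabilityMeasure (Q.map S) := Measure.isProbabilityMeasure_map hS_meas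
  have h_charFun (x : ℝ) :
      ∫ ω, Complex.exp (Complex.I * x * S ω) ∂Q = charFun (Q.map S) x := by
    rw [charFun_apply_real, integral_map hS_meas (by fun_prop)]
    simp_rw [mul_comm Complex.I, mul_right_comm]
  simp_rw [h_charFun]
  rw [← integral_abs_eq_two_div_pi_mul_integral_one_sub_re_charFun,
    integral_map hS_meas continuous_abs.aestronglyMeasurable]
end
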